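/- arXiv:1410.1618 — 2 statements merged into one kernel-verified Lean document; each statement's English description precedes it below -/
import Mathlib

section
/- Let Γ be a finite simplicial graph and v a vertex. Let Θ be a connected component of the induced subgraph of Γ on V ∖ st(v), and let Σ = V ∖ (Θ ∪ st(v)). Let Δ be a nonempty subset of V with v ∉ ŝt(Δ). Then ŝt(Δ) cannot intersect both Θ and Σ nontrivially. -/
/-- The link of a set of vertices: vertices adjacent to every vertex of `Δ`
(with `lkSet G ∅ = Set.univ`). -/
def lkSet {V : Type*} (G : SimpleGraph V) (Δ : Set V) : Set V :=
  {u | ∀ v ∈ Δ, G.Adj v u}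

/-- The star of a set of vertices. -/
def stSet {V : Type*} (G : SimpleGraph V) (Δ : Set V) : Set V :=
  Δ ∪ lkSet G Δ

/-- The extended star of a set of vertices. -/
def estSet {V : Type*} (G : SimpleGraph V) (Δ : Set V) : Set V :=
  lkSet G Δ ∪ lkSet G (lkSet G Δ)

/-- A set of vertices is a cone if some vertex of it is adjacent to all the others. -/
def IsCone {V : Type*} (G : SimpleGraph V) (Θ : Set V) : Prop :=
  ∃ a ∈ Θ, ∀ u ∈ Θ, u ≠ a → G.Adj a u

/-!
Since `v ∉ lk(lk Δ)`, some `w ∈ lk Δ` is not adjacent to `v`, and since `v ∉ lk Δ`, some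
`d ∈ Δ` is not adjacent to `v`; neither of them lies in `st(v)`. Outside `st(v)`, every vertex
of `lk Δ` is joined to `w` through `d`, and every vertex of `lk(lk Δ)` is adjacent to `w`.
Hence `ŝt(Δ) ∖ st(v)` lies in a single component of `V ∖ st(v)`, while `Θ` and `Σ` are
unions of different components.
-/

section

variable {V : Type*} (G : SimpleGraph V)

lemma mem_stSet_singleton_iff {v u : V} : u ∈ stSet G {v} ↔ u = v ∨ G.Adj v u := by
  simp [stSet, lkSet]

variable {G} {Δ : Set V} {v : V}

lemma exists_mem_lkSet_not_mem_stSet (hv : v ∉ estSet G Δ) :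
    ∃ w ∈ lkSet G Δ, w ∉ stSet G {v} := by
  have hv₂ : v ∉ lkSet G (lkSet G Δ) := fun h => hv (Or.inr h)
  obtain ⟨w, hw, hwv⟩ : ∃ w ∈ lkSet G Δ, ¬ G.Adj w v := by
    simpa [lkSet] using hv₂
  refine ⟨w, hw, ?_⟩
  rw [mem_stSet_singleton_iff]
  rintro (rfl | hvw)
  · exact hv (Or.inl hw)
  · exact hwv hvw.symm

lemma exists_mem_not_mem_stSet (hv : v ∉ estSet G Δ) : ∃ d ∈ Δ, d ∉ stSet G {v} := by
  obtain ⟨w, hw, hwv⟩ := exists_mem_lkSet_not_mem_stSet hv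
  obtain ⟨d, hd, hdv⟩ : ∃ d ∈ Δ, ¬ G.Adj d v := by
    simpa [lkSet] using fun h => hv (Or.inl h)
  refine ⟨d, hd, ?_⟩
  rw [mem_stSet_singleton_iff]
  rintro (rfl | hvd)
  · exact hwv ((mem_stSet_singleton_iff G).2 (Or.inr (hw d hd)))
  · exact hdv hvd.symm

lemma reachable_of_mem_estSet {S : Set V} {w d c : V} (hw : w ∈ lkSet G Δ) (hd : d ∈ Δ)
    (hwS : w ∈ S) (hdS : d ∈ S) (hcS : c ∈ S) (hc : c ∈ estSet G Δ) :
    (G.induce S).Reachable ⟨w, hwS⟩ ⟨c, hcS⟩ := by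
  rcases hc with hc | hc
  · have hwd : (G.induce S).Adj ⟨w, hwS⟩ ⟨d, hdS⟩ := (hw d hd).symm
    have hdc : (G.induce S).Adj ⟨d, hdS⟩ ⟨c, hcS⟩ := hc d hd
    exact hwd.reachable.trans hdc.reachable
  · exact SimpleGraph.Adj.reachable (G := G.induce S) (hc w hw)

lemma reachable_of_mem_estSet_of_not_mem_estSet (hv : v ∉ estSet G Δ) {a b : V}
    (ha : a ∈ (stSet G {v})ᶜ) (hb : b ∈ (stSet G {v})ᶜ)
    (haΔ : a ∈ estSet G Δ) (hbΔ : b ∈ estSet G Δ) :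
    (G.induce (stSet G {v})ᶜ).Reachable ⟨a, ha⟩ ⟨b, hb⟩ := by
  obtain ⟨w, hw, hwS⟩ := exists_mem_lkSet_not_mem_stSet hv
  obtain ⟨d, hd, hdS⟩ := exists_mem_not_mem_stSet hv
  exact (reachable_of_mem_estSet hw hd hwS hdS ha haΔ).symm.trans
    (reachable_of_mem_estSet hw hd hwS hdS hb hbΔ)

end

theorem est_not_meeting_both_components_general {V : Type*} (G : SimpleGraph V)
    (v : V) (S : Set V) (hS : S = (stSet G {v})ᶜ)
    (x : ↥S) (Θ : Set V)
    (hΘ : Θ = Subtype.val '' {u : ↥S | (SimpleGraph.induce S G).Reachable x u})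
    (Sg : Set V) (hSg : Sg = (Θ ∪ stSet G {v})ᶜ)
    (Δ : Set V) (hv : v ∉ estSet G Δ) :
    ¬ ((estSet G Δ ∩ Θ).Nonempty ∧ (estSet G Δ ∩ Sg).Nonempty) := by
  subst hS hΘ hSg
  rintro ⟨⟨_, haΔ, ⟨a, hxa, rfl⟩⟩, ⟨b, hbΔ, hb⟩⟩
  simp only [Set.compl_union, Set.mem_inter_iff] at hb
  obtain ⟨hbΘ, hbS⟩ := hb
  exact hbΘ ⟨⟨b, hbS⟩, hxa.trans
    (reachable_of_mem_estSet_of_not_mem_estSet hv a.2 hbS haΔ hbΔ), rfl⟩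

theorem est_not_meeting_both_components {V : Type*} [Fintype V] (G : SimpleGraph V)
    (v : V) (S : Set V) (hS : S = (stSet G {v})ᶜ)
    (x : ↥S) (Θ : Set V)
    (hΘ : Θ = Subtype.val '' {u : ↥S | (SimpleGraph.induce S G).Reachable x u})
    (Sg : Set V) (hSg : Sg = (Θ ∪ stSet G {v})ᶜ)
    (Δ : Set V) (hΔ : Δ.Nonempty) (hv : v ∉ estSet G Δ) :
    ¬ ((estSet G Δ ∩ Θ).Nonempty ∧ (estSet G Δ ∩ Sg).Nonempty) :=
  est_not_meeting_both_components_general G v S hS x Θ hΘ Sg hSg Δ hv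
end

section
/- Let Γ be a finite simplicial graph with vertex set V and let L be a collection of subsets of V satisfying: (a) L is closed under pairwise intersection; (b) if Δ, Σ ∈ L and lk(Δ ∩ Σ) ⊆ st(Δ), then Δ ∪ Σ ∈ L; (c) ŝt(Δ) ∈ L for every subset Δ ⊆ V; (d) lk(Δ) ∈ L for every subset Δ ⊆ V that is not a cone; (e) st(Δ) ∈ L for every Δ ∈ L; and V ∈ L. Suppose Σ ∈ L is maximal with respect to inclusion among proper members of L (i.e., Σ ≠ V and there is no T ∈ L with Σ ⊊ T ⊊ V). Then for every vertex w in the boundary ∂Σ, one has V ∖ Σ ⊆ lk(w). -/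
/-!
Suppose `u ∉ Σ` is not adjacent to `w`, and pick `z ∈ lk(w) ∖ Σ`. Whenever `T ∈ L` contains `w`,
satisfies `lk(w) ⊆ st(T)` and is not contained in `Σ`, axiom (b) and maximality give `T ∪ Σ = V`.
Applied to `ŝt(w)` this puts `u` in `lk(lk(w))`. Now strip apexes off `lk(w)` until a non-cone
`Λ` remains. If `Λ ⊆ Σ`, every vertex of `lk(w) ∖ Σ` is an apex, so `lk(w) ⊆ st(Σ ∩ ŝt(w))`, and
`T = st(Σ ∩ ŝt(w))` forces `u ∈ lk(w)`. Otherwise `T = lk(Λ)` (a member by (d), containing `u`)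
must cover the vertices of `Λ ∖ Σ`, which is impossible.
-/

section Link

variable {V : Type*} {G : SimpleGraph V}

theorem lkSet_anti {Δ Θ : Set V} (h : Δ ⊆ Θ) : lkSet G Θ ⊆ lkSet G Δ :=
  fun _ hu v hv => hu v (h hv)

theorem lkSet_subset_lkSet_singleton {Δ : Set V} {w : V} (hw : w ∈ Δ) :
    lkSet G Δ ⊆ lkSet G {w} :=
  lkSet_anti (Set.singleton_subset_iff.mpr hw)

theorem subset_lkSet_lkSet (Δ : Set V) : Δ ⊆ lkSet G (lkSet G Δ) :=
  fun x hx _ hv => (hv x hx).symm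

theorem notMem_lkSet_of_mem {Δ : Set V} {x : V} (hx : x ∈ Δ) : x ∉ lkSet G Δ :=
  fun h => G.loopless.irrefl x (h x hx)

theorem subset_stSet (Δ : Set V) : Δ ⊆ stSet G Δ :=
  Set.subset_union_left

theorem exists_not_isCone_subset [Finite V] (S : Set V) :
    ∃ Λ ⊆ S, ¬ IsCone G Λ ∧ ∀ k ∈ S \ Λ, ∀ x ∈ S, x ≠ k → G.Adj k x := by
  set P : Set V → Prop := fun Λ => Λ ⊆ S ∧ ∀ k ∈ S \ Λ, ∀ x ∈ S, x ≠ k → G.Adj k x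
  obtain ⟨Λ, hΛ⟩ := exists_minimal_of_wellFoundedLT P ⟨S, subset_rfl, by simp⟩
  obtain ⟨hΛS, hapex⟩ := hΛ.prop
  refine ⟨Λ, hΛS, ?_, hapex⟩
  rintro ⟨a, haΛ, ha⟩
  have hsmaller : P (Λ \ {a}) := by
    refine ⟨Set.sdiff_subset.trans hΛS, fun k ⟨hkS, hkΛ⟩ x hxS hxk => ?_⟩
    by_cases hka : k = a
    · subst hka
      by_cases hxΛ : x ∈ Λ
      · exact ha x hxΛ hxk
      · exact (hapex x ⟨hxS, hxΛ⟩ k hkS (Ne.symm hxk)).symm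
    · exact hapex k ⟨hkS, fun h => hkΛ ⟨h, hka⟩⟩ x hxS hxk
  exact (hΛ.eq_of_le hsmaller Set.sdiff_subset ▸ haΛ).2 rfl

theorem subset_stSet_of_apexes {S Λ A : Set V} (hΛA : Λ ⊆ A) (hA : A ⊆ S ∪ lkSet G S)
    (hapex : ∀ k ∈ S \ Λ, ∀ x ∈ S, x ≠ k → G.Adj k x) : S ⊆ stSet G A := by
  intro x hxS
  by_cases hxA : x ∈ A
  · exact Or.inl hxA
  refine Or.inr fun s hsA => ?_
  rcases hA hsA with hsS | hsS
  · exact (hapex x ⟨hxS, fun h => hxA (hΛA h)⟩ s hsS fun h => hxA (h ▸ hsA)).symm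
  · exact (hsS x hxS).symm

theorem subset_stSet_lkSet_of_apexes {S Λ : Set V} (hΛS : Λ ⊆ S)
    (hapex : ∀ k ∈ S \ Λ, ∀ x ∈ S, x ≠ k → G.Adj k x) :
    S ⊆ stSet G (lkSet G Λ) := by
  intro v hvS
  by_cases hvΛ : v ∈ Λ
  · exact Or.inr (subset_lkSet_lkSet Λ hvΛ)
  · exact Or.inl fun y hy => (hapex v ⟨hvS, hvΛ⟩ y (hΛS hy) fun h => hvΛ (h ▸ hy)).symm

end Link

theorem compl_subset_of_lkSet_singleton_subset {V : Type*} {G : SimpleGraph V}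
    {L : Set (Set V)}
    (hb : ∀ Δ ∈ L, ∀ Sg ∈ L, lkSet G (Δ ∩ Sg) ⊆ stSet G Δ → Δ ∪ Sg ∈ L)
    {Sg : Set V} (hSg : Sg ∈ L) (hmax : ∀ T ∈ L, Sg ⊂ T → T = Set.univ)
    {T : Set V} (hT : T ∈ L) {w : V} (hwT : w ∈ T) (hw : w ∈ Sg)
    (hlk : lkSet G {w} ⊆ stSet G T) (hTSg : ¬ T ⊆ Sg) : Sgᶜ ⊆ T := by
  have hunion : T ∪ Sg ∈ L :=
    hb T hT Sg hSg ((lkSet_subset_lkSet_singleton (Set.mem_inter hwT hw)).trans hlk)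
  have huniv : T ∪ Sg = Set.univ :=
    hmax _ hunion (Set.ssubset_iff_subset_ne.mpr ⟨Set.subset_union_right,
      fun h => hTSg (h ▸ Set.subset_union_left)⟩)
  intro u hu
  exact (huniv ▸ Set.mem_univ u : u ∈ T ∪ Sg).resolve_right hu

theorem boundary_link_contains_complement_general {V : Type*} [Fintype V] (G : SimpleGraph V)
    (L : Set (Set V))
    (ha : ∀ Δ ∈ L, ∀ Sg ∈ L, Δ ∩ Sg ∈ L)
    (hb : ∀ Δ ∈ L, ∀ Sg ∈ L, lkSet G (Δ ∩ Sg) ⊆ stSet G Δ → Δ ∪ Sg ∈ L)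
    (hc : ∀ Δ : Set V, estSet G Δ ∈ L)
    (hd : ∀ Δ : Set V, ¬ IsCone G Δ → lkSet G Δ ∈ L)
    (he : ∀ Δ ∈ L, stSet G Δ ∈ L)
    (Sg : Set V) (hSg : Sg ∈ L)
    (hmax : ∀ T ∈ L, Sg ⊂ T → T = Set.univ)
    (w : V) (hw : w ∈ Sg) (hbd : ¬ lkSet G {w} ⊆ Sg) :
    Sgᶜ ⊆ lkSet G {w} := by
  obtain ⟨z, hz, hzSg⟩ := Set.not_subset.mp hbd
  have absorb := @compl_subset_of_lkSet_singleton_subset _ G L hb Sg hSg hmax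
  have hwest : w ∈ estSet G {w} := Or.inr (subset_lkSet_lkSet {w} rfl)
  have hest : Sgᶜ ⊆ estSet G {w} := absorb (hc {w}) hwest hw
    (Set.subset_union_left.trans (subset_stSet _)) fun h => hzSg (h (Or.inl hz))
  intro u hu
  refine (hest hu).elim id fun hu₂ => ?_
  obtain ⟨Λ, hΛ, hnc, hapex⟩ := exists_not_isCone_subset (G := G) (lkSet G {w})
  by_cases hΛSg : Λ ⊆ Sg
  · set A := Sg ∩ estSet G {w}
    have hlkA : lkSet G {w} ⊆ stSet G A :=
      subset_stSet_of_apexes (fun x hx => ⟨hΛSg hx, Or.inl (hΛ hx)⟩) Set.inter_subset_right hapex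
    have hwA : w ∈ A := ⟨hw, hwest⟩
    have huA := absorb (he A (ha Sg hSg _ (hc {w}))) (subset_stSet A hwA) hw
      (hlkA.trans (subset_stSet _)) fun h => hzSg (h (hlkA hz))
    exact (huA hu).elim (fun h => absurd h.1 hu) fun h => lkSet_subset_lkSet_singleton hwA h
  · obtain ⟨x, hxΛ, hxSg⟩ := Set.not_subset.mp hΛSg
    have hcover := absorb (hd Λ hnc) (subset_lkSet_lkSet {w} rfl |> lkSet_anti hΛ) hw
      (subset_stSet_lkSet_of_apexes hΛ hapex) fun h => hu (h (lkSet_anti hΛ hu₂))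
    exact absurd (hcover hxSg) (notMem_lkSet_of_mem hxΛ)

theorem boundary_link_contains_complement {V : Type*} [Fintype V] (G : SimpleGraph V)
    (L : Set (Set V))
    (ha : ∀ Δ ∈ L, ∀ Sg ∈ L, Δ ∩ Sg ∈ L)
    (hb : ∀ Δ ∈ L, ∀ Sg ∈ L, lkSet G (Δ ∩ Sg) ⊆ stSet G Δ → Δ ∪ Sg ∈ L)
    (hc : ∀ Δ : Set V, estSet G Δ ∈ L)
    (hd : ∀ Δ : Set V, ¬ IsCone G Δ → lkSet G Δ ∈ L)
    (he : ∀ Δ ∈ L, stSet G Δ ∈ L)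
    (huniv : Set.univ ∈ L)
    (Sg : Set V) (hSg : Sg ∈ L) (hne : Sg ≠ Set.univ)
    (hmax : ∀ T ∈ L, Sg ⊂ T → T = Set.univ)
    (w : V) (hw : w ∈ Sg) (hbd : ¬ lkSet G {w} ⊆ Sg) :
    Sgᶜ ⊆ lkSet G {w} :=
  boundary_link_contains_complement_general G L ha hb hc hd he Sg hSg hmax w hw hbd
end
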